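/- Let a ∈ (0,1) and b := √(1 − a²). Suppose ψ = (ψ₁,ψ₂) : 𝔻 → 𝔹₂ is holomorphic and B is a Blaschke product of degree 2 such that F_ε ∘ ψ = B on 𝔻 for every ε ∈ [0,1). Then b·ψ₁² = a²·ψ₂ on 𝔻, B = ψ₁²/a² on 𝔻, and there exist α ∈ 𝔻 and η ∈ ℂ with |η| = 1 such that B = η·m_α²; moreover ψ₂ = b·η·m_α² and ψ₁² = a²·η·m_α² on 𝔻. -/

import Mathlib

open Metric Set Complex

noncomputable section

/-- `ℂⁿ` with the Euclidean norm; `𝔹ₙ` is `Metric.ball 0 1` in this space. -/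
abbrev En (n : ℕ) := EuclideanSpace ℂ (Fin n)

/-- The Möbius map `m_a` interchanging `0` and `a`. -/
def mob (a z : ℂ) : ℂ := (a - z) / (1 - (starRingEnd ℂ) a * z)

/-- A Blaschke product of degree `k`: `z ↦ η * ∏ j, m_{α j}(z)` with `|η| = 1`, `α j ∈ 𝔻`. -/
def IsBlaschke (k : ℕ) (B : ℂ → ℂ) : Prop :=
  ∃ η : ℂ, ‖η‖ = 1 ∧ ∃ α : Fin k → ℂ, (∀ j, α j ∈ ball (0 : ℂ) 1) ∧
    ∀ z : ℂ, B z = η * ∏ j, mob (α j) z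

/-- The Pick problem `𝔹ₙ → 𝔻`, `z j ↦ lam j`, is extremal: it is solvable by a holomorphic
map `𝔹ₙ → 𝔻`, but by no holomorphic solution with `sup_{𝔹ₙ} |G| < 1`. -/
def ExtremalPick {n : ℕ} {ι : Type} (z : ι → En n) (lam : ι → ℂ) : Prop :=
  (∃ F : En n → ℂ, DifferentiableOn ℂ F (ball 0 1) ∧
      MapsTo F (ball (0 : En n) 1) (ball (0 : ℂ) 1) ∧ ∀ j, F (z j) = lam j) ∧
  ¬ ∃ G : En n → ℂ, DifferentiableOn ℂ G (ball 0 1) ∧ (∀ j, G (z j) = lam j) ∧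
      ∃ r : ℝ, r < 1 ∧ ∀ x ∈ ball (0 : En n) 1, ‖G x‖ ≤ r

/-- An extremal 3-point Pick problem is non-degenerate if no 2-point subproblem is extremal. -/
def ExtremalPick3Nondeg {n : ℕ} (z : Fin 3 → En n) (lam : Fin 3 → ℂ) : Prop :=
  ExtremalPick z lam ∧
    ∀ i j : Fin 3, i ≠ j → ¬ ExtremalPick ![z i, z j] ![lam i, lam j]

/-- The function `F(z) = (z₁² + 2bz₂)/(2 − a²)` with `b = √(1 − a²)`. -/
def Fa (a : ℝ) (z : En 2) : ℂ :=
  ((z 0) ^ 2 + 2 * ((Real.sqrt (1 - a ^ 2) : ℝ) : ℂ) * z 1) / (2 - (a : ℂ) ^ 2)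

/-- The function `F_ε(z) = F(z)/√(1 − (ε²/(2−a²)²)(bz₁² − a²z₂)²)`, principal branch. -/
def Feps (a ε : ℝ) (z : En 2) : ℂ :=
  Fa a z /
    ((1 - ((ε : ℂ) ^ 2 / (2 - (a : ℂ) ^ 2) ^ 2) *
        (((Real.sqrt (1 - a ^ 2) : ℝ) : ℂ) * (z 0) ^ 2 - (a : ℂ) ^ 2 * z 1) ^ 2) ^
      ((1 : ℂ) / 2))

/-! At `ε = 0` the hypothesis says `B = F ∘ ψ`. For `ε > 0`, at every point where `B ≠ 0` the
identity `F_ε(ψ) = F(ψ)` forces the square root to be `1`, so `g := bψ₁² − a²ψ₂` vanishes there.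
A Blaschke product has finitely many zeros, so `g ≡ 0` by the identity theorem, and then
`F(ψ) = ψ₁²/a²`. Thus `B` is locally the square of the holomorphic function `ψ₁/a`, so its zeros
have even order; for `B = η m_{α₀} m_{α₁}` this forces `α₀ = α₁`, because `(m_{α₀} m_{α₁})'(α₀)`
is `m_{α₀}'(α₀) m_{α₁}(α₀) ≠ 0` otherwise. -/

open Filter Topology

theorem AnalyticOnNhd.eqOn_zero_of_eqOn_zero_off_finite {𝕜 E : Type*} [NontriviallyNormedField 𝕜]
    [NormedAddCommGroup E] [NormedSpace 𝕜 E] {f : 𝕜 → E} {U S : Set 𝕜}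
    (hf : AnalyticOnNhd 𝕜 f U) (hU : IsPreconnected U) (hUo : IsOpen U) (hS : S.Finite)
    (h : EqOn f 0 (U \ S)) : EqOn f 0 U := by
  intro z hz
  refine hf.eqOn_zero_of_preconnected_of_frequently_eq_zero hU hz (Eventually.frequently ?_) hz
  have hS' : (S \ {z})ᶜ ∈ 𝓝 z := hS.sdiff.isClosed.isOpen_compl.mem_nhds (by simp)
  filter_upwards [nhdsWithin_le_nhds hS', nhdsWithin_le_nhds (hUo.mem_nhds hz),
    self_mem_nhdsWithin] with w hwS hwU hwz
  exact h ⟨hwU, fun hw => hwS ⟨hw, hwz⟩⟩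

lemma one_sub_conj_mul_ne_zero {a z : ℂ} (ha : ‖a‖ < 1) (hz : ‖z‖ < 1) :
    1 - starRingEnd ℂ a * z ≠ 0 := by
  have : ‖starRingEnd ℂ a * z‖ < 1 := by
    rw [norm_mul, Complex.norm_conj]
    nlinarith [norm_nonneg a, norm_nonneg z]
  intro h
  rw [sub_eq_zero] at h
  simp [← h] at this

@[simp]
lemma mob_self (a : ℂ) : mob a a = 0 := by simp [mob]

lemma mob_eq_zero_iff {a z : ℂ} (h : 1 - starRingEnd ℂ a * z ≠ 0) : mob a z = 0 ↔ z = a := by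
  rw [mob, div_eq_zero_iff, or_iff_left h, sub_eq_zero, eq_comm]

lemma hasDerivAt_mob {a z : ℂ} (h : 1 - starRingEnd ℂ a * z ≠ 0) :
    HasDerivAt (mob a) ((starRingEnd ℂ a * a - 1) / (1 - starRingEnd ℂ a * z) ^ 2) z := by
  refine (((hasDerivAt_id z).const_sub a).div
    (((hasDerivAt_id z).const_mul (starRingEnd ℂ a)).const_sub 1) h).congr_deriv ?_
  simp only [id]
  ring

lemma IsBlaschke.finite_zeros {k : ℕ} {B : ℂ → ℂ} (hB : IsBlaschke k B) :
    {z ∈ ball (0 : ℂ) 1 | B z = 0}.Finite := by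
  obtain ⟨η, hη, α, hα, hB⟩ := hB
  have hη₀ : η ≠ 0 := by rintro rfl; simp at hη
  refine (Set.finite_range α).subset ?_
  rintro z ⟨hz, hBz⟩
  rw [hB, mul_eq_zero, Finset.prod_eq_zero_iff, or_iff_right hη₀] at hBz
  obtain ⟨j, -, hj⟩ := hBz
  rw [mem_ball_zero_iff] at hz
  exact ⟨j, ((mob_eq_zero_iff (one_sub_conj_mul_ne_zero (mem_ball_zero_iff.1 (hα j)) hz)).1 hj).symm⟩

lemma eq_of_mob_mul_mob_eventuallyEq_sq {a c η : ℂ} (ha : ‖a‖ < 1) (hc : ‖c‖ < 1) (hη : η ≠ 0)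
    {h : ℂ → ℂ} (hh : DifferentiableAt ℂ h a)
    (hsq : (fun z => η * (mob a z * mob c z)) =ᶠ[𝓝 a] fun z => h z ^ 2) : c = a := by
  by_contra hca
  have hha : h a = 0 := by simpa [eq_comm (a := (0 : ℂ))] using hsq.eq_of_nhds
  have hd₀ : HasDerivAt (fun z => η * (mob a z * mob c z)) 0 a := by
    simpa [hha] using (hh.hasDerivAt.pow 2).congr_of_eventuallyEq hsq
  have hda := hasDerivAt_mob (one_sub_conj_mul_ne_zero ha ha)
  have hdc := hasDerivAt_mob (one_sub_conj_mul_ne_zero hc ha)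
  have hd := ((hda.mul hdc).const_mul η).unique hd₀
  rw [mob_self, zero_mul, add_zero] at hd
  have hden := one_sub_conj_mul_ne_zero ha ha
  have hnum : starRingEnd ℂ a * a - 1 ≠ 0 := by
    rw [← neg_sub]; exact neg_ne_zero.2 hden
  have hmc : mob c a ≠ 0 := fun h0 =>
    hca ((mob_eq_zero_iff (one_sub_conj_mul_ne_zero hc ha)).1 h0).symm
  exact mul_ne_zero hη (mul_ne_zero (div_ne_zero hnum (pow_ne_zero 2 hden)) hmc) hd

lemma Feps_zero (a : ℝ) (z : En 2) : Feps a 0 z = Fa a z := by simp [Feps]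

lemma eq_one_of_cpow_one_half_eq_one {w : ℂ} (h : w ^ ((1 : ℂ) / 2) = 1) : w = 1 := by
  have := Complex.cpow_nat_inv_pow w two_ne_zero
  rwa [Nat.cast_ofNat, ← one_div, h, one_pow, eq_comm] at this

lemma sqrt_mul_sq_eq_of_Feps_eq_Fa {a ε : ℝ} {z : En 2} (hε : ε ≠ 0) (ha : (2 : ℂ) - a ^ 2 ≠ 0)
    (hF : Fa a z ≠ 0) (h : Feps a ε z = Fa a z) :
    (√(1 - a ^ 2) : ℂ) * z 0 ^ 2 = a ^ 2 * z 1 := by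
  rw [Feps, div_eq_mul_inv, mul_eq_left₀ hF, inv_eq_one] at h
  have hc : (ε : ℂ) ^ 2 / (2 - (a : ℂ) ^ 2) ^ 2 ≠ 0 := by
    have : (ε : ℂ) ≠ 0 := by exact_mod_cast hε
    positivity
  have := eq_one_of_cpow_one_half_eq_one h
  rw [sub_eq_self, mul_eq_zero, or_iff_right hc, sq_eq_zero_iff, sub_eq_zero] at this
  exact this

lemma sqrt_mul_sq_eq_of_Feps_comp_eq {a ε : ℝ} (hε : ε ≠ 0) (ha : (2 : ℂ) - a ^ 2 ≠ 0)
    {U : Set ℂ} (hU : IsPreconnected U) (hUo : IsOpen U) {ψ : ℂ → En 2}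
    (hψ : DifferentiableOn ℂ ψ U) {B : ℂ → ℂ} (hB : {z ∈ U | B z = 0}.Finite)
    (hF : ∀ z ∈ U, Fa a (ψ z) = B z) (hFε : ∀ z ∈ U, Feps a ε (ψ z) = B z) :
    ∀ z ∈ U, (√(1 - a ^ 2) : ℂ) * ψ z 0 ^ 2 = a ^ 2 * ψ z 1 := by
  have hψ' := differentiableOn_euclidean.1 hψ
  have hG : AnalyticOnNhd ℂ (fun z => (√(1 - a ^ 2) : ℂ) * ψ z 0 ^ 2 - a ^ 2 * ψ z 1) U :=
    ((((hψ' 0).pow 2).const_mul _).sub ((hψ' 1).const_mul _)).analyticOnNhd hUo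
  refine fun z hz => sub_eq_zero.1 (hG.eqOn_zero_of_eqOn_zero_off_finite hU hUo hB ?_ hz)
  rintro w ⟨hw, hBw⟩
  refine sub_eq_zero.2 (sqrt_mul_sq_eq_of_Feps_eq_Fa hε ha ?_ ((hFε w hw).trans (hF w hw).symm))
  rw [hF w hw]
  exact fun h => hBw ⟨hw, h⟩

lemma Fa_eq_sq_div_of_sqrt_mul_sq_eq {a : ℝ} (ha : a ≠ 0) (ha1 : a ^ 2 ≤ 1) {z : En 2}
    (h : (√(1 - a ^ 2) : ℂ) * z 0 ^ 2 = a ^ 2 * z 1) : Fa a z = z 0 ^ 2 / a ^ 2 := by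
  have hb : ((√(1 - a ^ 2) : ℝ) : ℂ) ^ 2 = 1 - a ^ 2 := by
    rw [← Complex.ofReal_pow, Real.sq_sqrt (by linarith)]
    push_cast
    ring
  have h2 : (2 : ℂ) - a ^ 2 ≠ 0 := by
    exact_mod_cast (by nlinarith : (2 : ℝ) - a ^ 2 ≠ 0)
  have ha' : (a : ℂ) ≠ 0 := by exact_mod_cast ha
  rw [Fa, div_eq_div_iff h2 (pow_ne_zero 2 ha')]
  linear_combination (-2 * ((√(1 - a ^ 2) : ℝ) : ℂ)) * h + 2 * z 0 ^ 2 * hb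

theorem stmt_10_general (a : ℝ) (ha : a ∈ Ioo (0 : ℝ) 1) (b : ℝ) (hb : b = Real.sqrt (1 - a ^ 2))
    (ψ : ℂ → En 2) (hψ : DifferentiableOn ℂ ψ (ball 0 1))
    (B : ℂ → ℂ) (hB : IsBlaschke 2 B)
    (heq : ∀ ε ∈ Ico (0 : ℝ) 1, ∀ lam ∈ ball (0 : ℂ) 1, Feps a ε (ψ lam) = B lam) :
    (∀ lam ∈ ball (0 : ℂ) 1,
        (b : ℂ) * (ψ lam 0) ^ 2 = (a : ℂ) ^ 2 * ψ lam 1 ∧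
        B lam = (ψ lam 0) ^ 2 / (a : ℂ) ^ 2) ∧
      ∃ α ∈ ball (0 : ℂ) 1, ∃ η : ℂ, ‖η‖ = 1 ∧
        ∀ lam ∈ ball (0 : ℂ) 1,
          B lam = η * (mob α lam) ^ 2 ∧
          ψ lam 1 = (b : ℂ) * η * (mob α lam) ^ 2 ∧
          (ψ lam 0) ^ 2 = (a : ℂ) ^ 2 * η * (mob α lam) ^ 2 := by
  obtain ⟨ha₀, ha₁⟩ := ha
  subst hb
  have ha₂ : (a : ℂ) ^ 2 ≠ 0 := pow_ne_zero 2 (by exact_mod_cast ha₀.ne')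
  have h2a : (2 : ℂ) - a ^ 2 ≠ 0 := by exact_mod_cast (by nlinarith : (2 : ℝ) - a ^ 2 ≠ 0)
  have hF : ∀ lam ∈ ball (0 : ℂ) 1, Fa a (ψ lam) = B lam := fun lam hlam => by
    rw [← Feps_zero]
    exact heq 0 ⟨le_rfl, one_pos⟩ lam hlam
  have hrel := sqrt_mul_sq_eq_of_Feps_comp_eq one_half_pos.ne' h2a
    (convex_ball 0 1).isPreconnected isOpen_ball hψ hB.finite_zeros hF
    (heq _ ⟨one_half_pos.le, one_half_lt_one⟩)
  have hsq : ∀ lam ∈ ball (0 : ℂ) 1, B lam = ψ lam 0 ^ 2 / a ^ 2 := fun lam hlam =>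
    (hF lam hlam).symm.trans (Fa_eq_sq_div_of_sqrt_mul_sq_eq ha₀.ne' (by nlinarith) (hrel lam hlam))
  obtain ⟨η, hη, α, hα, hB⟩ := hB
  have hα₁ : α 1 = α 0 := by
    refine eq_of_mob_mul_mob_eventuallyEq_sq (η := η) (h := fun z => ψ z 0 / a)
      (mem_ball_zero_iff.1 (hα 0)) (mem_ball_zero_iff.1 (hα 1)) (by rintro rfl; simp at hη)
      (((differentiableOn_euclidean.1 hψ 0).differentiableAt
        (isOpen_ball.mem_nhds (hα 0))).div_const _) ?_
    filter_upwards [isOpen_ball.mem_nhds (hα 0)] with z hz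
    rw [← Fin.prod_univ_two (f := fun j => mob (α j) z), ← hB, hsq z hz, div_pow]
  refine ⟨fun lam hlam => ⟨hrel lam hlam, hsq lam hlam⟩, α 0, hα 0, η, hη, fun lam hlam => ?_⟩
  have hBα : B lam = η * mob (α 0) lam ^ 2 := by rw [hB, Fin.prod_univ_two, hα₁, sq]
  have hψ₀ : ψ lam 0 ^ 2 = a ^ 2 * η * mob (α 0) lam ^ 2 := by
    rw [mul_assoc, ← hBα, hsq lam hlam, mul_div_cancel₀ _ ha₂]
  refine ⟨hBα, mul_left_cancel₀ ha₂ ?_, hψ₀⟩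
  rw [← hrel lam hlam, hψ₀]
  ring

/-- if `ψ : 𝔻 → 𝔹₂` is holomorphic and `B` is a Blaschke product of degree `2`
with `F_ε ∘ ψ = B` on `𝔻` for all `ε ∈ [0,1)`, then `bψ₁² = a²ψ₂` and `B = ψ₁²/a²` on `𝔻`,
and `B = η m_α²`, `ψ₂ = bη m_α²`, `ψ₁² = a²η m_α²` on `𝔻` for some `α ∈ 𝔻`, `|η| = 1`. -/
theorem stmt_10 (a : ℝ) (ha : a ∈ Ioo (0 : ℝ) 1) (b : ℝ) (hb : b = Real.sqrt (1 - a ^ 2))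
    (ψ : ℂ → En 2) (hψ : DifferentiableOn ℂ ψ (ball 0 1))
    (hψm : MapsTo ψ (ball (0 : ℂ) 1) (ball (0 : En 2) 1))
    (B : ℂ → ℂ) (hB : IsBlaschke 2 B)
    (heq : ∀ ε ∈ Ico (0 : ℝ) 1, ∀ lam ∈ ball (0 : ℂ) 1, Feps a ε (ψ lam) = B lam) :
    (∀ lam ∈ ball (0 : ℂ) 1,
        (b : ℂ) * (ψ lam 0) ^ 2 = (a : ℂ) ^ 2 * ψ lam 1 ∧
        B lam = (ψ lam 0) ^ 2 / (a : ℂ) ^ 2) ∧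
      ∃ α ∈ ball (0 : ℂ) 1, ∃ η : ℂ, ‖η‖ = 1 ∧
        ∀ lam ∈ ball (0 : ℂ) 1,
          B lam = η * (mob α lam) ^ 2 ∧
          ψ lam 1 = (b : ℂ) * η * (mob α lam) ^ 2 ∧
          (ψ lam 0) ^ 2 = (a : ℂ) ^ 2 * η * (mob α lam) ^ 2 :=
  stmt_10_general a ha b hb ψ hψ B hB heq
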